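/- arXiv:1902.10041 — 4 statements merged into one kernel-verified Lean document; each statement's English description precedes it below -/
import Mathlib

section
/- If a predicate φ : ℕ^Σ → {true, false} is implemented by a protocol that is both shadow-permitting and truncatable, then φ is a counting predicate. -/
open scoped Classical

/-- A configuration: finitely many agents (identified by natural numbers) with states in `Q`,
and finitely many packets (identified by natural numbers) carrying messages in `M`.
`agentState a = none` means `a` is not an agent of the configuration, and similarly
`packetMsg p = none` means `p` is not a packet of the configuration. -/
structure Config (Q : Type) (M : Type) where
  agentState : ℕ → Option Q
  packetMsg : ℕ → Option M
  finAgents : {a : ℕ | agentState a ≠ none}.Finite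
  finPackets : {p : ℕ | packetMsg p ≠ none}.Finite

namespace Config

variable {Q M : Type}

/-- The set `Dom(C_A)` of agents of a configuration. -/
def agentsDom (C : Config Q M) : Set ℕ := {a | C.agentState a ≠ none}

/-- The set `Dom(C_P)` of packets of a configuration. -/
def packetsDom (C : Config Q M) : Set ℕ := {p | C.packetMsg p ≠ none}

/-- Update (add, change or remove) the state of agent `a`. -/
def setAgent (C : Config Q M) (a : ℕ) (s : Option Q) : Config Q M where
  agentState := Function.update C.agentState a s
  packetMsg := C.packetMsg
  finAgents := by
    apply Set.Finite.subset (C.finAgents.union (Set.finite_singleton a))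
    intro x hx
    rcases eq_or_ne x a with h | h
    · exact Or.inr h
    · exact Or.inl (by simpa [Function.update, h] using hx)
  finPackets := C.finPackets

/-- Update (add, change or remove) the content of packet `p`. -/
def setPacket (C : Config Q M) (p : ℕ) (m : Option M) : Config Q M where
  agentState := C.agentState
  packetMsg := Function.update C.packetMsg p m
  finAgents := C.finAgents
  finPackets := by
    apply Set.Finite.subset (C.finPackets.union (Set.finite_singleton p))
    intro x hx
    rcases eq_or_ne x p with h | h
    · exact Or.inr h
    · exact Or.inl (by simpa [Function.update, h] using hx)

/-- Rename agents and packets by permutations of `ℕ`: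
the agent `a` of the result is in the state of agent `πA a` of `C`. -/
def rename (C : Config Q M) (πA πP : Equiv.Perm ℕ) : Config Q M where
  agentState := fun a => C.agentState (πA a)
  packetMsg := fun p => C.packetMsg (πP p)
  finAgents := by
    have h : {a : ℕ | C.agentState (πA a) ≠ none} = πA ⁻¹' C.agentsDom := rfl
    rw [h]
    exact C.finAgents.preimage πA.injective.injOn
  finPackets := by
    have h : {p : ℕ | C.packetMsg (πP p) ≠ none} = πP ⁻¹' C.packetsDom := rfl
    rw [h]
    exact C.finPackets.preimage πP.injective.injOn

/-- The number of agents of `C` in state `q`. -/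
noncomputable def numInState (C : Config Q M) (q : Q) : ℕ :=
  {a | C.agentState a = some q}.ncard

/-- The number of packets of `C` carrying message `m` (the supply of `m` in `C`). -/
noncomputable def supply (C : Config Q M) (m : M) : ℕ :=
  {p | C.packetMsg p = some m}.ncard

end Config

/-- The type of step relations: `Step C A C'` states that there is a step
from `C` to `C'` whose set of active agents is `A`. -/
abbrev StepRel (Q M : Type) := Config Q M → Set ℕ → Config Q M → Prop

/-- The conditions that the step relation of a protocol must satisfy:
agent conservation, agent and packet anonymity, possibility to ignore extra packets,
and possibility to add passive agents. -/
structure IsProtocolStep {Q M : Type} (Step : StepRel Q M) : Prop where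
  active_subset : ∀ {C A C'}, Step C A C' → A ⊆ C.agentsDom
  agent_conservation : ∀ {C A C'}, Step C A C' → C.agentsDom = C'.agentsDom
  anonymity : ∀ (πA πP : Equiv.Perm ℕ) {C A C'}, Step C A C' →
    Step (C.rename πA πP) (πA ⁻¹' A) (C'.rename πA πP)
  ignore_packets : ∀ {C A C'} (p : ℕ) (m : M), Step C A C' →
    C.packetMsg p = none → C'.packetMsg p = none →
    Step (C.setPacket p (some m)) A (C'.setPacket p (some m))
  add_passive : ∀ {C A C'} (a : ℕ) (q : Q), Step C A C' →
    C.agentState a = none → C'.agentState a = none →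
    ∃ q' : Q, Step (C.setAgent a (some q)) A (C'.setAgent a (some q'))

/-- `C → C'` : a step from `C` to `C'` with some set of active agents. -/
def stepTo {Q M : Type} (Step : StepRel Q M) (C C' : Config Q M) : Prop := ∃ A, Step C A C'

/-- Reachability via finitely many steps. -/
def Reaches {Q M : Type} (Step : StepRel Q M) : Config Q M → Config Q M → Prop :=
  Relation.ReflTransGen (stepTo Step)

/-- An infinite execution: at each moment either nothing changes or a single step occurs. -/
def IsExecution {Q M : Type} (Step : StepRel Q M) (E : ℕ → Config Q M) : Prop :=
  ∀ i, E (i + 1) = E i ∨ stepTo Step (E i) (E (i + 1))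

/-- A finite execution of length `n`, given by the first `n + 1` values of `E`. -/
def IsFinExecution {Q M : Type} (Step : StepRel Q M) (n : ℕ) (E : ℕ → Config Q M) : Prop :=
  ∀ i < n, E (i + 1) = E i ∨ stepTo Step (E i) (E (i + 1))

/-- The default fairness condition: every configuration either becomes unreachable from
some moment on, or occurs infinitely many times in the execution. -/
def DefaultFair {Q M : Type} (Step : StepRel Q M) (E : ℕ → Config Q M) : Prop :=
  ∀ C : Config Q M,
    (∃ n, ∀ m, n ≤ m → ¬ Reaches Step (E m) C) ∨ (∀ n, ∃ m, n ≤ m ∧ E m = C)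

/-- A fairness condition is eventual if every finite execution can be continued
to an infinite execution satisfying it. -/
def Eventual {Q M : Type} (Step : StepRel Q M) (Φ : (ℕ → Config Q M) → Prop) : Prop :=
  ∀ (n : ℕ) (E : ℕ → Config Q M), IsFinExecution Step n E →
    ∃ E' : ℕ → Config Q M, (∀ i ≤ n, E' i = E i) ∧ IsExecution Step E' ∧ Φ E'

/-- A fairness condition ensures activity if whenever an execution satisfying it is
constant from some moment on, no step leads from the final configuration to a
different configuration. -/
def EnsuresActivity {Q M : Type} (Step : StepRel Q M) (Φ : (ℕ → Config Q M) → Prop) : Prop :=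
  ∀ E, IsExecution Step E → Φ E → ∀ n, (∀ m, n ≤ m → E m = E n) →
    ∀ C', stepTo Step (E n) C' → C' = E n

/-- A protocol: input mapping, individual output function, step relation
and fairness condition (the finite sets of states `Q`, messages `M` and input
letters `Sg` are type parameters). -/
structure Protocol (Q M Sg : Type) where
  Iin : Sg → Q
  out : Q → Bool
  Step : StepRel Q M
  fair : (ℕ → Config Q M) → Prop

/-- `C` is a consensus with output value `b`. -/
def IsConsensus {Q M : Type} (out : Q → Bool) (C : Config Q M) (b : Bool) : Prop :=
  ∀ a q, C.agentState a = some q → out q = b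

/-- `C` is a stable consensus with output value `b`. -/
def IsStableConsensus {Q M : Type} (Step : StepRel Q M) (out : Q → Bool)
    (C : Config Q M) (b : Bool) : Prop :=
  ∀ D, Reaches Step C D → IsConsensus out D b

/-- `C` is an input configuration for the input `x` : no packets, and for every state `q`
exactly as many agents in `q` as prescribed by `x` and the input mapping. -/
def IsInputConfig {Q M Sg : Type} [Fintype Sg] (Iin : Sg → Q) (x : Sg → ℕ)
    (C : Config Q M) : Prop :=
  (∀ p, C.packetMsg p = none) ∧
  ∀ q : Q, C.numInState q = ∑ σ : Sg, if Iin σ = q then x σ else 0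

/-- The protocol `P` implements the predicate `φ` : every fair execution from an input
configuration for `x` reaches a stable consensus with output value `φ x`. -/
def Implements {Q M Sg : Type} [Fintype Sg] (P : Protocol Q M Sg)
    (φ : (Sg → ℕ) → Bool) : Prop :=
  ∀ (x : Sg → ℕ) (C0 : Config Q M), IsInputConfig P.Iin x C0 →
    ∀ E : ℕ → Config Q M, IsExecution P.Step E → P.fair E → E 0 = C0 →
      ∃ n, IsStableConsensus P.Step P.out (E n) (φ x)

/-- The unreliable version of a step relation: every step `C --A--> C'` additionally
allows all degraded steps `C --A--> C''` satisfying population preservation,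
state preservation, message preservation, and reliance on active agents. -/
def UnrelStep {Q M : Type} (Step : StepRel Q M) : StepRel Q M := fun C A C'' =>
  Step C A C'' ∨ ∃ C', Step C A C' ∧
    C''.agentsDom = C'.agentsDom ∧
    C''.packetMsg = C'.packetMsg ∧
    (∀ a, C''.agentState a = C.agentState a ∨ C''.agentState a = C'.agentState a) ∧
    ((∀ a ∉ A, C''.agentState a = C.agentState a) ∨
      (∀ a ∈ A, C''.agentState a = C'.agentState a))

/-- The unreliable protocol corresponding to `P`. -/
def Unreliable {Q M Sg : Type} (P : Protocol Q M Sg) : Protocol Q M Sg :=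
  { P with Step := UnrelStep P.Step }

/-- A shadow extension of the execution `E` around the agent `a`, using the fresh
agent `a'` : a set of executions starting from `E 0` with the extra agent `a'` added in
the state of `a`, such that removing `a'` from any of them yields `E`, and at every
moment some execution of the set has `a` and `a'` in the same state. -/
def IsShadowExtension {Q M : Type} (Step : StepRel Q M) (E : ℕ → Config Q M)
    (a a' : ℕ) (Ext : Set (ℕ → Config Q M)) : Prop :=
  a ∈ (E 0).agentsDom ∧ a' ∉ (E 0).agentsDom ∧
  (∀ E' ∈ Ext, IsExecution Step E' ∧ (E' 0).agentState a' = (E 0).agentState a ∧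
    ∀ k, (E' k).setAgent a' none = E k) ∧
  ∀ k, ∃ E' ∈ Ext, (E' k).agentState a' = (E' k).agentState a

/-- A protocol is shadow-permitting if from every configuration there is a fair
execution having a shadow extension around every agent. -/
def ShadowPermitting {Q M Sg : Type} (P : Protocol Q M Sg) : Prop :=
  ∀ C : Config Q M, ∃ E, IsExecution P.Step E ∧ E 0 = C ∧ P.fair E ∧
    ∀ a ∈ C.agentsDom, ∃ a' ∉ C.agentsDom,
      ∃ Ext, IsShadowExtension P.Step E a a' Ext

/-- Truncatability with constant `K` : adding a fresh agent in a state already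
represented by at least `K` agents of a stable consensus yields a stable consensus. -/
def TruncatableWith {Q M : Type} (Step : StepRel Q M) (out : Q → Bool) (K : ℕ) : Prop :=
  ∀ (C : Config Q M) (b : Bool) (q : Q), IsStableConsensus Step out C b →
    K ≤ C.numInState q → ∀ a', C.agentState a' = none →
      IsStableConsensus Step out (C.setAgent a' (some q)) b

/-- The cube with lower bounds `l` and (possibly infinite) upper bounds `u`. -/
def cube {Sg : Type} (l : Sg → ℕ) (u : Sg → ℕ∞) : Set (Sg → ℕ) :=
  {x | ∀ σ, l σ ≤ x σ ∧ (x σ : ℕ∞) ≤ u σ}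

/-- A counting set is a finite union of cubes. -/
def IsCountingSet {Sg : Type} (S : Set (Sg → ℕ)) : Prop :=
  ∃ (n : ℕ) (l : Fin n → Sg → ℕ) (u : Fin n → Sg → ℕ∞), S = ⋃ j, cube (l j) (u j)

/-- A counting predicate is the membership predicate of a counting set. -/
def IsCountingPred {Sg : Type} (φ : (Sg → ℕ) → Bool) : Prop :=
  IsCountingSet {x | φ x = true}

/-!
Fix `K` from truncatability. Incrementing a coordinate `x σ > |Q|·K` does not change `φ`:
run a shadow-permitting fair execution from `I(x)` until it reaches a stable consensus. By
pigeonhole some state `q` is then held by at least `K` of the agents that started in `I(σ)`,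
among them some `a`. The shadow `a'` of `a` that agrees with `a` at that moment gives an
execution from `I(x + e_σ)` ending in the old stable consensus plus one agent in `q`, which
truncatability keeps a stable consensus with the same output. Hence `φ x = φ (min x (|Q|·K + 1))`,
so `φ` is determined by finitely many truncated inputs, each of whose fibres is a cube.
-/

namespace Config

variable {Q M : Type}

theorem ext {C D : Config Q M} (hA : C.agentState = D.agentState)
    (hP : C.packetMsg = D.packetMsg) : C = D := by
  cases C; cases D; congr

@[simp]
theorem setAgent_agentState (C : Config Q M) (a : ℕ) (s : Option Q) :
    (C.setAgent a s).agentState = Function.update C.agentState a s := rfl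

@[simp]
theorem setAgent_packetMsg (C : Config Q M) (a : ℕ) (s : Option Q) :
    (C.setAgent a s).packetMsg = C.packetMsg := rfl

theorem setAgent_setAgent (C : Config Q M) (a : ℕ) (s t : Option Q) :
    (C.setAgent a s).setAgent a t = C.setAgent a t :=
  ext (Function.update_idem _ _ _) rfl

theorem setAgent_agentState_self (C : Config Q M) (a : ℕ) :
    C.setAgent a (C.agentState a) = C :=
  ext (Function.update_eq_self _ _) rfl

theorem eq_setAgent_of_setAgent_none_eq {C D : Config Q M} {a : ℕ}
    (h : C.setAgent a none = D) : C = D.setAgent a (C.agentState a) := by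
  rw [← h, setAgent_setAgent, setAgent_agentState_self]

theorem finite_setOf_agentState_eq (C : Config Q M) (q : Q) :
    {a | C.agentState a = some q}.Finite :=
  C.finAgents.subset fun a (ha : C.agentState a = some q) => by simp [ha]

theorem numInState_setAgent_of_eq_none (C : Config Q M) {a : ℕ} (ha : C.agentState a = none)
    (q q' : Q) :
    (C.setAgent a (some q)).numInState q' = C.numInState q' + if q = q' then 1 else 0 := by
  unfold numInState
  split_ifs with hq
  · subst hq
    have : {b | (C.setAgent a (some q)).agentState b = some q}
        = insert a {b | C.agentState b = some q} := by
      ext b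
      by_cases hb : b = a <;> simp [hb]
    rw [this, Set.ncard_insert_of_notMem (by simp [ha]) (C.finite_setOf_agentState_eq q)]
  · congr 1
    ext b
    by_cases hb : b = a <;> simp [hb, ha, hq]

theorem exists_mem_agentState_eq_and_le_numInState [Fintype Q] (C : Config Q M) (K : ℕ)
    (S : Finset ℕ) (hS : ∀ a ∈ S, a ∈ C.agentsDom) (hcard : Fintype.card Q * K < S.card) :
    ∃ a ∈ S, ∃ q, C.agentState a = some q ∧ K ≤ C.numInState q := by
  obtain ⟨y, hy, hK⟩ := Finset.exists_lt_card_fiber_of_mul_lt_card_of_maps_to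
    (t := Finset.univ.map .some) (f := C.agentState)
    (fun a ha => by
      obtain ⟨q, hq⟩ := Option.ne_none_iff_exists.mp (hS a ha)
      exact hq ▸ Finset.mem_map_of_mem _ (Finset.mem_univ q))
    (by simpa using hcard)
  obtain ⟨q, -, rfl⟩ := Finset.mem_map.mp hy
  obtain ⟨a, ha⟩ := Finset.card_pos.mp (K.zero_le.trans_lt hK)
  refine ⟨a, (Finset.mem_filter.mp ha).1, q, (Finset.mem_filter.mp ha).2, hK.le.trans ?_⟩
  rw [← Set.ncard_coe_finset]
  exact Set.ncard_le_ncard (fun b hb => (Finset.mem_filter.mp hb).2)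
    (C.finite_setOf_agentState_eq q)

def ofFun {N : ℕ} (f : Fin N → Q) : Config Q M where
  agentState a := if h : a < N then some (f ⟨a, h⟩) else none
  packetMsg _ := none
  finAgents := (Set.finite_lt_nat N).subset fun a ha => by
    by_contra h
    exact ha (dif_neg h)
  finPackets := by simp

theorem numInState_ofFun {N : ℕ} (f : Fin N → Q) (q : Q) :
    (ofFun f : Config Q M).numInState q = (Finset.univ.filter (f · = q)).card := by
  have : {a | (ofFun f : Config Q M).agentState a = some q} = Fin.val '' {i | f i = q} := by
    ext a
    simp only [ofFun, Set.mem_ofPred_eq, Set.mem_image]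
    split_ifs with h
    · constructor
      · exact fun hq => ⟨⟨a, h⟩, Option.some_injective _ hq, rfl⟩
      · rintro ⟨i, hi, rfl⟩
        simp [hi]
    · simp only [false_iff]
      rintro ⟨i, -, rfl⟩
      exact h i.isLt
  rw [numInState, this, Set.ncard_image_of_injective _ Fin.val_injective,
    Set.ncard_eq_toFinset_card', Set.toFinset_ofPred]

end Config

section Executions

variable {Q M : Type} {Step : StepRel Q M}

theorem IsExecution.reaches {E : ℕ → Config Q M} (hE : IsExecution Step E) {i j : ℕ}
    (hij : i ≤ j) : Reaches Step (E i) (E j) := by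
  induction hij with
  | refl => exact .refl
  | step _ ih =>
    rcases hE _ with h | h
    · rwa [h]
    · exact ih.tail h

theorem IsProtocolStep.agentsDom_eq_of_reaches (hP : IsProtocolStep Step) {C D : Config Q M}
    (h : Reaches Step C D) : C.agentsDom = D.agentsDom := by
  induction h with
  | refl => rfl
  | tail _ hstep ih =>
    obtain ⟨A, hA⟩ := hstep
    exact ih.trans (hP.agent_conservation hA)

theorem IsStableConsensus.eq_of_reaches {out : Q → Bool} {C D F : Config Q M} {b b' : Bool}
    (hC : IsStableConsensus Step out C b) (hD : IsStableConsensus Step out D b')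
    (hCF : Reaches Step C F) (hDF : Reaches Step D F) (hF : F.agentsDom.Nonempty) : b = b' := by
  obtain ⟨a, ha⟩ := hF
  obtain ⟨q, hq⟩ := Option.ne_none_iff_exists'.mp ha
  exact (hC F hCF a q hq).symm.trans (hD F hDF a q hq)

theorem IsShadowExtension.exists_execution {E : ℕ → Config Q M} {a a' : ℕ}
    {Ext : Set (ℕ → Config Q M)} (h : IsShadowExtension Step E a a' Ext) (n : ℕ) :
    ∃ E', IsExecution Step E' ∧
      E' 0 = (E 0).setAgent a' ((E 0).agentState a) ∧
      E' n = (E n).setAgent a' ((E n).agentState a) := by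
  obtain ⟨ha, ha', hExt, hsame⟩ := h
  obtain ⟨E', hE', hsame_n⟩ := hsame n
  obtain ⟨hexec, h0, hproj⟩ := hExt E' hE'
  have hne : a ≠ a' := fun h => ha' (h ▸ ha)
  refine ⟨E', hexec, ?_, ?_⟩
  · rw [← h0]
    exact Config.eq_setAgent_of_setAgent_none_eq (hproj 0)
  · rw [Config.eq_setAgent_of_setAgent_none_eq (hproj n), hsame_n, ← hproj n]
    simp [hne]

end Executions

section InputConfigs

variable {Q M Sg : Type} [Fintype Sg]

theorem exists_isInputConfig (Iin : Sg → Q) (x : Sg → ℕ) :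
    ∃ C : Config Q M, IsInputConfig Iin x C := by
  let e := Fintype.equivFin (Σ σ, Fin (x σ))
  refine ⟨Config.ofFun fun i => Iin (e.symm i).1, fun _ => rfl, fun q => ?_⟩
  rw [Config.numInState_ofFun, Finset.card_filter,
    e.symm.sum_comp fun s => if Iin s.1 = q then 1 else 0, Fintype.sum_sigma]
  refine Finset.sum_congr rfl fun σ _ => ?_
  split_ifs <;> simp

theorem IsInputConfig.le_numInState {Iin : Sg → Q} {x : Sg → ℕ} {C : Config Q M}
    (h : IsInputConfig Iin x C) (σ : Sg) : x σ ≤ C.numInState (Iin σ) := by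
  rw [h.2]
  simpa using Finset.single_le_sum (f := fun τ => if Iin τ = Iin σ then x τ else 0)
    (fun _ _ => Nat.zero_le _) (Finset.mem_univ σ)

theorem IsInputConfig.setAgent {Iin : Sg → Q} {x : Sg → ℕ} {C : Config Q M}
    (h : IsInputConfig Iin x C) {a : ℕ} (ha : C.agentState a = none) (σ : Sg) :
    IsInputConfig Iin (Function.update x σ (x σ + 1)) (C.setAgent a (some (Iin σ))) := by
  refine ⟨h.1, fun q => ?_⟩
  have hrest : ∑ τ ∈ Finset.univ.erase σ,
      (if Iin τ = q then Function.update x σ (x σ + 1) τ else 0)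
      = ∑ τ ∈ Finset.univ.erase σ, (if Iin τ = q then x τ else 0) :=
    Finset.sum_congr rfl fun τ hτ => by rw [Function.update_of_ne (Finset.ne_of_mem_erase hτ)]
  rw [C.numInState_setAgent_of_eq_none ha, h.2, ← Finset.add_sum_erase _ _ (Finset.mem_univ σ),
    ← Finset.add_sum_erase _ _ (Finset.mem_univ σ), hrest, Function.update_self]
  split_ifs <;> omega

end InputConfigs

section Counting

variable {Sg : Type}

def truncate (K : ℕ) (x : Sg → ℕ) : Sg → ℕ := fun σ => min (x σ) K

theorem truncate_eq_self {K : ℕ} {x : Sg → ℕ} (h : ∀ σ, x σ ≤ K) : truncate K x = x :=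
  funext fun σ => min_eq_left (h σ)

theorem apply_eq_apply_truncate [Fintype Sg] {φ : (Sg → ℕ) → Bool} {K : ℕ}
    (h : ∀ x σ, K ≤ x σ → φ (Function.update x σ (x σ + 1)) = φ x) (x : Sg → ℕ) :
    φ x = φ (truncate K x) := by
  by_cases hx : ∀ σ, x σ ≤ K
  · rw [truncate_eq_self hx]
  push Not at hx
  obtain ⟨σ, hσ⟩ := hx
  set y := Function.update x σ (x σ - 1)
  have hKy : K ≤ y σ := by simp [y]; omega
  have hyx : Function.update y σ (y σ + 1) = x := by
    ext τ
    by_cases hτ : τ = σ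
    · subst hτ; simp [y]; omega
    · simp [y, hτ]
  have htr : truncate K y = truncate K x := by
    ext τ
    by_cases hτ : τ = σ
    · subst hτ; simp [y, truncate]; omega
    · simp [y, truncate, hτ]
  calc φ x = φ (Function.update y σ (y σ + 1)) := by rw [hyx]
    _ = φ y := h y σ hKy
    _ = φ (truncate K y) := apply_eq_apply_truncate h y
    _ = φ (truncate K x) := by rw [htr]
termination_by ∑ σ, (x σ - K)
decreasing_by
  refine Finset.sum_lt_sum (fun τ _ => ?_) ⟨σ, Finset.mem_univ σ, ?_⟩
  · by_cases hτ : τ = σ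
    · subst hτ; simp; omega
    · simp [hτ]
  · simp; omega

theorem mem_cube_iff_truncate_eq {K : ℕ} (y : Sg → Fin (K + 1)) (x : Sg → ℕ) :
    x ∈ cube (fun σ => (y σ : ℕ)) (fun σ => if (y σ : ℕ) = K then ⊤ else (y σ : ℕ)) ↔
      truncate K x = fun σ => (y σ : ℕ) := by
  simp only [cube, Set.mem_ofPred_eq, funext_iff, truncate]
  refine forall_congr' fun σ => ?_
  have := (y σ).isLt
  split_ifs with h
  · simp only [le_top, and_true]; omega
  · rw [Nat.cast_le]; omega

theorem isCountingSet_iUnion {ι : Type*} [Finite ι] (l : ι → Sg → ℕ) (u : ι → Sg → ℕ∞) :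
    IsCountingSet (⋃ i, cube (l i) (u i)) := by
  obtain ⟨n, ⟨e⟩⟩ := Finite.exists_equiv_fin ι
  exact ⟨n, l ∘ e.symm, u ∘ e.symm,
    (e.symm.surjective.iUnion_comp fun i => cube (l i) (u i)).symm⟩

theorem isCountingPred_of_apply_eq_apply_truncate [Finite Sg] {φ : (Sg → ℕ) → Bool} (K : ℕ)
    (h : ∀ x, φ x = φ (truncate K x)) : IsCountingPred φ := by
  have : {x | φ x = true} = ⋃ y : {y : Sg → Fin (K + 1) // φ (fun σ => (y σ : ℕ)) = true},
      cube (fun σ => (y.1 σ : ℕ)) (fun σ => if (y.1 σ : ℕ) = K then ⊤ else (y.1 σ : ℕ)) := by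
    ext x
    simp only [Set.mem_ofPred_eq, Set.mem_iUnion, mem_cube_iff_truncate_eq, Subtype.exists]
    constructor
    · intro hx
      exact ⟨fun σ => ⟨min (x σ) K, by omega⟩, h x ▸ hx, rfl⟩
    · rintro ⟨y, hy, hxy⟩
      rwa [h, hxy]
  rw [IsCountingPred, this]
  exact isCountingSet_iUnion _ _

end Counting

section Protocols

variable {Q M Sg : Type} [Fintype Sg] {P : Protocol Q M Sg} {φ : (Sg → ℕ) → Bool}

theorem Implements.apply_eq_of_reaches_stableConsensus (himpl : Implements P φ)
    (hP : IsProtocolStep P.Step) (hEv : Eventual P.Step P.fair) {x : Sg → ℕ}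
    {E : ℕ → Config Q M} {n : ℕ} (hE : IsFinExecution P.Step n E)
    (hinput : IsInputConfig P.Iin x (E 0)) (hne : (E 0).agentsDom.Nonempty) {b : Bool}
    (hstab : IsStableConsensus P.Step P.out (E n) b) : φ x = b := by
  obtain ⟨E', hpre, hexec, hfair⟩ := hEv n E hE
  rw [← hpre 0 n.zero_le] at hinput hne
  rw [← hpre n le_rfl] at hstab
  obtain ⟨m, hm⟩ := himpl x (E' 0) hinput E' hexec hfair rfl
  refine hm.eq_of_reaches hstab (hexec.reaches (le_max_right n m))
    (hexec.reaches (le_max_left n m)) ?_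
  rwa [← hP.agentsDom_eq_of_reaches (hexec.reaches (Nat.zero_le _))]

theorem Implements.apply_update_add_one_eq [Fintype Q] (himpl : Implements P φ)
    (hP : IsProtocolStep P.Step) (hEv : Eventual P.Step P.fair) (hshadow : ShadowPermitting P)
    {K : ℕ} (htr : TruncatableWith P.Step P.out K) {x : Sg → ℕ} {σ : Sg}
    (hx : Fintype.card Q * K < x σ) : φ (Function.update x σ (x σ + 1)) = φ x := by
  obtain ⟨C, hC⟩ := exists_isInputConfig (M := M) P.Iin x
  obtain ⟨E, hexec, rfl, hfair, hshadowE⟩ := hshadow C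
  obtain ⟨n, hstab⟩ := himpl x (E 0) hC E hexec hfair rfl
  have hdom := hP.agentsDom_eq_of_reaches (hexec.reaches n.zero_le)
  let S := ((E 0).finite_setOf_agentState_eq (P.Iin σ)).toFinset
  have hS : ∀ a ∈ S, a ∈ (E n).agentsDom := fun a ha => by
    simp only [S, Set.Finite.mem_toFinset, Set.mem_ofPred_eq] at ha
    exact hdom ▸ (by simp [Config.agentsDom, ha] : a ∈ (E 0).agentsDom)
  have hcard : Fintype.card Q * K < S.card := by
    rw [← Set.ncard_eq_toFinset_card _ ((E 0).finite_setOf_agentState_eq _)]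
    exact hx.trans_le (hC.le_numInState σ)
  obtain ⟨a, haS, q, hq, hK⟩ :=
    (E n).exists_mem_agentState_eq_and_le_numInState K S hS hcard
  have ha : (E 0).agentState a = some (P.Iin σ) := by simpa [S] using haS
  obtain ⟨a', ha', Ext, hExt⟩ := hshadowE a (by simp [Config.agentsDom, ha])
  obtain ⟨E', hexec', h0, hn⟩ := hExt.exists_execution n
  rw [ha] at h0
  rw [hq] at hn
  have ha'0 : (E 0).agentState a' = none := by simpa [Config.agentsDom] using ha'
  have ha'n : (E n).agentState a' = none := by
    have : a' ∉ (E n).agentsDom := hdom ▸ ha'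
    simpa [Config.agentsDom] using this
  refine himpl.apply_eq_of_reaches_stableConsensus hP hEv (fun i (_ : i < n) => hexec' i)
    (h0 ▸ hC.setAgent ha'0 σ) ⟨a', by simp [h0, Config.agentsDom]⟩ ?_
  exact hn ▸ htr _ _ q hstab hK a' ha'n

end Protocols

theorem shadow_truncatable_implies_counting_general {Q M Sg : Type} [Fintype Q]
    [Fintype Sg] (P : Protocol Q M Sg)
    (hP : IsProtocolStep P.Step)
    (hEv : Eventual P.Step P.fair)
    (hshadow : ShadowPermitting P) (htrunc : ∃ K, TruncatableWith P.Step P.out K)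
    (φ : (Sg → ℕ) → Bool) (himpl : Implements P φ) :
    IsCountingPred φ := by
  obtain ⟨K, htr⟩ := htrunc
  exact isCountingPred_of_apply_eq_apply_truncate (Fintype.card Q * K + 1)
    (apply_eq_apply_truncate fun _ _ hx => himpl.apply_update_add_one_eq hP hEv hshadow htr hx)

/-- If a predicate is implemented by a protocol that is both shadow-permitting and
truncatable, then it is a counting predicate. -/
theorem shadow_truncatable_implies_counting {Q M Sg : Type} [Fintype Q] [Nonempty Q]
    [Fintype M] [Fintype Sg] [Nonempty Sg] (P : Protocol Q M Sg)
    (hP : IsProtocolStep P.Step)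
    (hEv : Eventual P.Step P.fair) (hAct : EnsuresActivity P.Step P.fair)
    (hshadow : ShadowPermitting P) (htrunc : ∃ K, TruncatableWith P.Step P.out K)
    (φ : (Sg → ℕ) → Bool) (himpl : Implements P φ) :
    IsCountingPred φ :=
  shadow_truncatable_implies_counting_general P hP hEv hshadow htrunc φ himpl
end

section
/- Let P be a fully asynchronous protocol with a single-letter input alphabet whose fairness condition is eventual and ensures activity with respect to the unreliable step relation, and suppose the unreliable protocol corresponding to P is well-specified (implements some predicate). Then the unreliable protocol corresponding to P has a careful fair execution starting from the input configuration consisting of a single agent in the only input state and no packets. -/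
open scoped Classical

/-- A step relation is fully asynchronous: every step has exactly one active agent,
no passive agent changes its state, packets are only sent or only consumed in each
step, and packet contents do not change. -/
def FullyAsync {Q M : Type} (Step : StepRel Q M) : Prop :=
  ∀ C A C', Step C A C' →
    (∃ a, A = {a}) ∧
    (∀ a, a ∉ A → C'.agentState a = C.agentState a) ∧
    (C.packetsDom ⊆ C'.packetsDom ∨ C'.packetsDom ⊆ C.packetsDom) ∧
    (∀ p, p ∈ C.packetsDom → p ∈ C'.packetsDom → C'.packetMsg p = C.packetMsg p)

/-- The number of packets consumed in a step from `C` to `C'`. -/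
noncomputable def consumed {Q M : Type} (C C' : Config Q M) : ℕ :=
  (C.packetsDom \ C'.packetsDom).ncard

/-- `d` is the in-degree of the step relation: the maximum number of packets consumed
in a single step. -/
def IsInDegree {Q M : Type} (Step : StepRel Q M) (d : ℕ) : Prop :=
  (∀ C A C', Step C A C' → consumed C C' ≤ d) ∧
  ∀ d' : ℕ, (∀ C A C', Step C A C' → consumed C C' ≤ d') → d ≤ d'

/-- `F(x,y,z,k) = (16(xyz+1))^(32(xyz+1) - 2k)`. -/
def Fbound (x y z k : ℕ) : ℕ := (16 * (x * y * z + 1)) ^ (32 * (x * y * z + 1) - 2 * k)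

/-- `S` is a set of messages all of whose members have supply in `C` at least
`F(|Q|, |M|, d, |S|)`. -/
def ValidAbundance {Q M : Type} [Fintype Q] [Fintype M] (C : Config Q M) (d : ℕ)
    (S : Finset M) : Prop :=
  ∀ m ∈ S, Fbound (Fintype.card Q) (Fintype.card M) d S.card ≤ C.supply m

/-- `m` is abundant in `C`, i.e. `m` belongs to the abundance set of `C` (the largest
set all of whose members meet the supply threshold; since `F` decreases in its last
argument, the family of such sets is closed under unions, so membership in the largest
such set is equivalent to membership in some such set). -/
def Abundant {Q M : Type} [Fintype Q] [Fintype M] (C : Config Q M) (d : ℕ) (m : M) :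
    Prop :=
  ∃ S : Finset M, ValidAbundance C d S ∧ m ∈ S

/-- `m` is expendable at moment `n` of the execution `E` if it is abundant in some
configuration that has occurred in `E` up to that moment. -/
def Expendable {Q M : Type} [Fintype Q] [Fintype M] (E : ℕ → Config Q M) (d n : ℕ)
    (m : M) : Prop :=
  ∃ k ≤ n, Abundant (E k) d m

/-- An execution is careful if no step that decreases the supply of a non-expendable
message changes agent states. -/
def Careful {Q M : Type} [Fintype Q] [Fintype M] (E : ℕ → Config Q M) (d : ℕ) : Prop :=
  ∀ n m, ¬ Expendable E d n m → (E (n + 1)).supply m < (E n).supply m →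
    ∀ a, (E (n + 1)).agentState a = (E n).agentState a


/- ########## Auxiliary development ########## -/

section Aux

variable {Q M : Type}

lemma Config.ext' {C D : Config Q M} (h1 : C.agentState = D.agentState)
    (h2 : C.packetMsg = D.packetMsg) : C = D := by
  cases C; cases D; simp_all

lemma agentsDom_eq_of_agentState_eq {C D : Config Q M}
    (h : C.agentState = D.agentState) : C.agentsDom = D.agentsDom := by
  simp [Config.agentsDom, h]

lemma supply_eq_of_packetMsg_eq {C D : Config Q M}
    (h : C.packetMsg = D.packetMsg) (m : M) : C.supply m = D.supply m := by
  simp [Config.supply, h]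

lemma fiber_finite (C : Config Q M) (m : M) : {p | C.packetMsg p = some m}.Finite :=
  C.finPackets.subset (fun p hp => by
    simp only [Set.mem_setOf_eq] at hp ⊢; simp [hp])

lemma supply_setPacket_fresh (C : Config Q M) {p : ℕ} (hp : C.packetMsg p = none)
    (m0 m : M) :
    (C.setPacket p (some m0)).supply m = C.supply m + (if m = m0 then 1 else 0) := by
  unfold Config.supply Config.setPacket
  by_cases h : m = m0
  · subst h
    have hset : {x | Function.update C.packetMsg p (some m) x = some m}
        = insert p {x | C.packetMsg x = some m} := by
      ext x
      rcases eq_or_ne x p with rfl | hx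
      · simp [Function.update_self]
      · simp [Function.update_of_ne hx, hx]
    rw [hset, Set.ncard_insert_of_notMem (by simp [hp]) (fiber_finite C m)]
    simp
  · have hset : {x | Function.update C.packetMsg p (some m0) x = some m}
        = {x | C.packetMsg x = some m} := by
      ext x
      rcases eq_or_ne x p with rfl | hx
      · simp [Function.update_self, hp, Ne.symm h]
      · simp [Function.update_of_ne hx]
    rw [hset]
    simp [h]

lemma supply_rename_one (C : Config Q M) (π : Equiv.Perm ℕ) (m : M) :
    (C.rename 1 π).supply m = C.supply m := by
  unfold Config.supply Config.rename
  have h : {p | C.packetMsg (π p) = some m} = π ⁻¹' {p | C.packetMsg p = some m} := rfl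
  have h2 : ⇑π ⁻¹' {p | C.packetMsg p = some m}
      = ⇑π.symm '' {p | C.packetMsg p = some m} := by
    rw [Equiv.image_eq_preimage_symm]; simp
  rw [h, h2]
  exact Set.ncard_image_of_injective _ π.symm.injective

lemma agentState_rename_one (C : Config Q M) (π : Equiv.Perm ℕ) :
    (C.rename 1 π).agentState = C.agentState := by
  funext a; simp [Config.rename]

lemma exists_perm_comp {α : Type} (f g : ℕ → Option α)
    (he : ∀ v, Nonempty ({p // g p = v} ≃ {p // f p = v})) :
    ∃ π : Equiv.Perm ℕ, ∀ p, f (π p) = g p := by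
  have e : ∀ v, {p // g p = v} ≃ {p // f p = v} := fun v => (he v).some
  set φ : ℕ → ℕ := fun p => (e (g p) ⟨p, rfl⟩).1 with hφ
  have hfφ : ∀ p, f (φ p) = g p := fun p => (e (g p) ⟨p, rfl⟩).2
  have key : ∀ (p : ℕ) (v : Option α) (h : g p = v), φ p = (e v ⟨p, h⟩).1 := by
    intro p v h; subst h; rfl
  have hinj : Function.Injective φ := by
    intro p q hpq
    have hg : g p = g q := by rw [← hfφ p, ← hfφ q, hpq]
    have h1 : φ p = (e (g q) ⟨p, hg⟩).1 := key p (g q) hg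
    have h2 : φ q = (e (g q) ⟨q, rfl⟩).1 := key q (g q) rfl
    have hout : (e (g q)) ⟨p, hg⟩ = (e (g q)) ⟨q, rfl⟩ :=
      Subtype.ext (by rw [← h1, ← h2]; exact hpq)
    exact congrArg Subtype.val ((e (g q)).injective hout)
  have hsurj : Function.Surjective φ := by
    intro x
    refine ⟨((e (f x)).symm ⟨x, rfl⟩).1, ?_⟩
    have hp : g (((e (f x)).symm ⟨x, rfl⟩).1) = f x := ((e (f x)).symm ⟨x, rfl⟩).2
    rw [key _ (f x) hp]
    have : (⟨((e (f x)).symm ⟨x, rfl⟩).1, hp⟩ : {p // g p = f x})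
        = (e (f x)).symm ⟨x, rfl⟩ := Subtype.ext rfl
    rw [this, Equiv.apply_symm_apply]
  exact ⟨Equiv.ofBijective φ ⟨hinj, hsurj⟩, hfφ⟩

lemma nonempty_fiber_equiv (C X : Config Q M)
    (hs : ∀ m, X.supply m = C.supply m) :
    ∀ v : Option M, Nonempty ({p // X.packetMsg p = v} ≃ {p // C.packetMsg p = v}) := by
  intro v
  match v with
  | none =>
    have h1 : {p | X.packetMsg p = none} = X.packetsDomᶜ := by
      ext p; simp [Config.packetsDom]
    have h2 : {p | C.packetMsg p = none} = C.packetsDomᶜ := by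
      ext p; simp [Config.packetsDom]
    have hX : {p | X.packetMsg p = none}.Infinite := by
      rw [h1]; exact X.finPackets.infinite_compl
    have hC : {p | C.packetMsg p = none}.Infinite := by
      rw [h2]; exact C.finPackets.infinite_compl
    have iX : Infinite {p // X.packetMsg p = none} := hX.to_subtype
    have iC : Infinite {p // C.packetMsg p = none} := hC.to_subtype
    have : Cardinal.mk {p // X.packetMsg p = none}
        = Cardinal.mk {p // C.packetMsg p = none} := by
      apply le_antisymm
      · exact le_trans Cardinal.mk_le_aleph0 (Cardinal.aleph0_le_mk _)
      · exact le_trans Cardinal.mk_le_aleph0 (Cardinal.aleph0_le_mk _)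
    exact Cardinal.eq.mp this
  | some m =>
    have fX : {p | X.packetMsg p = some m}.Finite := fiber_finite X m
    have fC : {p | C.packetMsg p = some m}.Finite := fiber_finite C m
    haveI : Fintype {p // X.packetMsg p = some m} := fX.fintype
    haveI : Fintype {p // C.packetMsg p = some m} := fC.fintype
    refine ⟨Fintype.equivOfCardEq ?_⟩
    have cX : Fintype.card {p // X.packetMsg p = some m} = X.supply m := by
      rw [← Nat.card_eq_fintype_card]
      exact Nat.card_coe_set_eq _
    have cC : Fintype.card {p // C.packetMsg p = some m} = C.supply m := by
      rw [← Nat.card_eq_fintype_card]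
      exact Nat.card_coe_set_eq _
    rw [cX, cC, hs m]

lemma exists_rename_eq (C X : Config Q M) (ha : X.agentState = C.agentState)
    (hs : ∀ m, X.supply m = C.supply m) : ∃ π : Equiv.Perm ℕ, C.rename 1 π = X := by
  obtain ⟨π, hπ⟩ := exists_perm_comp C.packetMsg X.packetMsg (nonempty_fiber_equiv C X hs)
  refine ⟨π, Config.ext' ?_ (funext hπ)⟩
  rw [agentState_rename_one, ha]

end Aux


section Aux2

variable {Q M : Type}

/-- Iterated `ignore_packets`: pad a step by `c m` extra packets of each message `m`. -/
lemma pad_many [Fintype M] {Step : StepRel Q M} (hP : IsProtocolStep Step) :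
    ∀ (n : ℕ) (c : M → ℕ), (∑ m, c m) = n → ∀ {C A C'}, Step C A C' →
    ∃ Ch Ch', Step Ch A Ch' ∧ Ch.agentState = C.agentState ∧
      Ch'.agentState = C'.agentState ∧
      (∀ m, Ch.supply m = C.supply m + c m) ∧
      (∀ m, Ch'.supply m = C'.supply m + c m) := by
  intro n
  induction n using Nat.strong_induction_on with
  | _ n IH =>
    intro c hc C A C' hstep
    rcases eq_or_ne n 0 with rfl | hn
    · have hz : ∀ m ∈ Finset.univ, c m = 0 := by
        intro m _
        exact Finset.sum_eq_zero_iff.mp hc m (Finset.mem_univ m)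
      refine ⟨C, C', hstep, rfl, rfl, fun m => ?_, fun m => ?_⟩ <;>
        simp [hz m (Finset.mem_univ m)]
    · have hpos : 0 < ∑ m, c m := by omega
      obtain ⟨m0, _, hm0⟩ := Finset.exists_ne_zero_of_sum_ne_zero (by omega :
        (∑ m, c m) ≠ 0)
      set c' : M → ℕ := Function.update c m0 (c m0 - 1) with hc'
      have hsum' : (∑ m, c' m) = n - 1 := by
        rw [hc', Finset.sum_update_of_mem (Finset.mem_univ m0),
          Finset.sdiff_singleton_eq_erase]
        have h2 := Finset.add_sum_erase Finset.univ c (Finset.mem_univ m0)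
        omega
      obtain ⟨Ch, Ch', hstep1, ha1, ha1', hs1, hs1'⟩ :=
        IH (n - 1) (by omega) c' hsum' hstep
      obtain ⟨p, hp⟩ := (Ch.finPackets.union Ch'.finPackets).infinite_compl.nonempty
      have hpnone : Ch.packetMsg p = none ∧ Ch'.packetMsg p = none := by
        simp only [Set.mem_compl_iff, Set.mem_union, Set.mem_setOf_eq, not_or,
          not_ne_iff] at hp
        exact hp
      refine ⟨Ch.setPacket p (some m0), Ch'.setPacket p (some m0),
        hP.ignore_packets p m0 hstep1 hpnone.1 hpnone.2, ha1, ha1', fun m => ?_, fun m => ?_⟩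
      · rw [supply_setPacket_fresh Ch hpnone.1 m0 m, hs1 m, hc']
        rcases eq_or_ne m m0 with rfl | hm
        · simp; omega
        · simp [Function.update_of_ne hm, hm]
      · rw [supply_setPacket_fresh Ch' hpnone.2 m0 m, hs1' m, hc']
        rcases eq_or_ne m m0 with rfl | hm
        · simp; omega
        · simp [Function.update_of_ne hm, hm]

/-- Normal form of an unreliable step. -/
lemma unrel_norm {Step : StepRel Q M} {C A C''} (h : UnrelStep Step C A C'') :
    ∃ C', Step C A C' ∧ C''.agentsDom = C'.agentsDom ∧ C''.packetMsg = C'.packetMsg ∧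
      (∀ a, C''.agentState a = C.agentState a ∨ C''.agentState a = C'.agentState a) ∧
      ((∀ a ∉ A, C''.agentState a = C.agentState a) ∨
        (∀ a ∈ A, C''.agentState a = C'.agentState a)) := by
  rcases h with h | h
  · exact ⟨C'', h, rfl, rfl, fun a => Or.inr rfl, Or.inr fun a _ => rfl⟩
  · exact h

/-- Replay an unreliable step from a configuration with the same agent states and
`c` extra packets of each message. -/
lemma replay [Fintype M] {Step : StepRel Q M} (hP : IsProtocolStep Step) {C A C''}
    (h : UnrelStep Step C A C'') (X : Config Q M) (c : M → ℕ)
    (ha : X.agentState = C.agentState) (hs : ∀ m, X.supply m = C.supply m + c m) :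
    ∃ X'', UnrelStep Step X A X'' ∧ X''.agentState = C''.agentState ∧
      ∀ m, X''.supply m = C''.supply m + c m := by
  obtain ⟨C', hstep, hdom, hpkt, hper, hdisj⟩ := unrel_norm h
  obtain ⟨Ch, Ch', hstep2, haCh, haCh', hsCh, hsCh'⟩ := pad_many hP (∑ m, c m) c rfl hstep
  obtain ⟨π, hπ⟩ := exists_rename_eq Ch X (ha.trans haCh.symm)
    (fun m => by rw [hs m, hsCh m])
  have hstep3 := hP.anonymity 1 π hstep2
  rw [hπ] at hstep3
  have hA : (⇑(1 : Equiv.Perm ℕ)) ⁻¹' A = A := by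
    simp
  rw [hA] at hstep3
  set D' := Ch'.rename 1 π with hD'
  have haD' : D'.agentState = C'.agentState := by
    rw [hD', agentState_rename_one, haCh']
  have hsD' : ∀ m, D'.supply m = C'.supply m + c m := by
    intro m; rw [hD', supply_rename_one, hsCh' m]
  refine ⟨⟨C''.agentState, D'.packetMsg, C''.finAgents, D'.finPackets⟩,
    Or.inr ⟨D', hstep3, ?_, rfl, ?_, ?_⟩, rfl, ?_⟩
  · have h1 : Config.agentsDom ⟨C''.agentState, D'.packetMsg, C''.finAgents,
        D'.finPackets⟩ = C''.agentsDom := rfl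
    rw [h1, hdom, ← agentsDom_eq_of_agentState_eq haD']
  · intro a
    simp only
    rw [← ha, ← haD'] at hper
    exact hper a
  · rcases hdisj with hd | hd
    · exact Or.inl (fun a haA => by simp only; rw [(hd a haA), ha])
    · exact Or.inr (fun a haA => by simp only; rw [(hd a haA), haD'])
  · intro m
    have h1 : Config.supply ⟨C''.agentState, D'.packetMsg, C''.finAgents,
        D'.finPackets⟩ m = D'.supply m := rfl
    rw [h1, hsD' m, supply_eq_of_packetMsg_eq hpkt m]

/-- The fully degraded version of a step: packets change, no agent state changes. -/
lemma degraded {Step : StepRel Q M} (hP : IsProtocolStep Step) {C : Config Q M}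
    {A : Set ℕ} {C' : Config Q M}
    (hstep : Step C A C') :
    UnrelStep Step C A ⟨C.agentState, C'.packetMsg, C.finAgents, C'.finPackets⟩ :=
  Or.inr ⟨C', hstep, by
    have h1 : Config.agentsDom ⟨C.agentState, C'.packetMsg, C.finAgents, C'.finPackets⟩
        = C.agentsDom := rfl
    rw [h1, hP.agent_conservation hstep], rfl,
    fun a => Or.inl rfl, Or.inl fun a _ => rfl⟩

lemma supply_mono_of_subset {C C' : Config Q M} (hsub : C.packetsDom ⊆ C'.packetsDom)
    (hagree : ∀ p, p ∈ C.packetsDom → p ∈ C'.packetsDom →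
      C'.packetMsg p = C.packetMsg p) :
    ∀ m, C.supply m ≤ C'.supply m := by
  intro m
  apply Set.ncard_le_ncard ?_ (fiber_finite C' m)
  intro p hp
  simp only [Set.mem_setOf_eq] at hp ⊢
  have hd : p ∈ C.packetsDom := by simp [Config.packetsDom, hp]
  rw [hagree p hd (hsub hd), hp]

end Aux2


section Aux3

variable {Q M : Type} [Fintype Q] [Fintype M]

lemma expendable_mono {E E' : ℕ → Config Q M} {d n n' : ℕ}
    (hag : ∀ i ≤ n, E' i = E i) (hn : n ≤ n') {m : M}
    (h : Expendable E d n m) : Expendable E' d n' m := by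
  obtain ⟨k, hk, hab⟩ := h
  exact ⟨k, le_trans hk hn, by rw [hag k hk]; exact hab⟩

lemma expendable_congr {E E' : ℕ → Config Q M} {d n : ℕ}
    (hag : ∀ i ≤ n, E' i = E i) (m : M) :
    Expendable E' d n m ↔ Expendable E d n m :=
  ⟨fun ⟨k, hk, hab⟩ => ⟨k, hk, by rw [← hag k hk]; exact hab⟩,
   fun h => expendable_mono hag le_rfl h⟩

/-- A finite execution prefix from `C0` which is careful so far. -/
structure GoodPrefix (Step : StepRel Q M) (d : ℕ) (C0 : Config Q M) where
  N : ℕ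
  E : ℕ → Config Q M
  h0 : E 0 = C0
  hexec : IsFinExecution (UnrelStep Step) N E
  hcare : ∀ n < N, ∀ m, ¬ Expendable E d n m →
    (E (n + 1)).supply m < (E n).supply m →
    ∀ a, (E (n + 1)).agentState a = (E n).agentState a

variable {Step : StepRel Q M} {d : ℕ} {C0 : Config Q M}

lemma GoodPrefix.append (G : GoodPrefix Step d C0) {A : Set ℕ} {Y : Config Q M}
    (hstep : UnrelStep Step (G.E G.N) A Y)
    (hc : (Y.agentState = (G.E G.N).agentState) ∨
      (∀ m, Y.supply m < (G.E G.N).supply m → Expendable G.E d G.N m)) :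
    ∃ G' : GoodPrefix Step d C0, G'.N = G.N + 1 ∧ (∀ i ≤ G.N, G'.E i = G.E i) ∧
      G'.E G'.N = Y := by
  set E' : ℕ → Config Q M := fun i => if i ≤ G.N then G.E i else Y with hE'
  have hag : ∀ i ≤ G.N, E' i = G.E i := fun i hi => by simp [hE', hi]
  have hend : E' (G.N + 1) = Y := by simp [hE']
  refine ⟨⟨G.N + 1, E', ?_, ?_, ?_⟩, rfl, hag, hend⟩
  · rw [hag 0 (Nat.zero_le _)]; exact G.h0
  · intro i hi
    rcases Nat.lt_or_ge i G.N with h | h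
    · rw [hag i (le_of_lt h), hag (i + 1) h]
      exact G.hexec i h
    · have hiN : i = G.N := by omega
      subst hiN
      rw [hag G.N le_rfl, hend]
      exact Or.inr ⟨A, hstep⟩
  · intro n hn m hne hdec a
    rcases Nat.lt_or_ge n G.N with h | h
    · rw [hag n (le_of_lt h), hag (n + 1) h] at hdec ⊢
      have hag' : ∀ i ≤ n, E' i = G.E i := fun i hi => hag i (le_trans hi (le_of_lt h))
      exact G.hcare n h m (fun hex => hne ((expendable_congr hag' m).mpr hex)) hdec a
    · have hnN : n = G.N := by omega
      subst hnN
      rw [hag G.N le_rfl, hend] at hdec ⊢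
      rcases hc with hc | hc
      · rw [hc]
      · exact absurd ((expendable_congr hag m).mpr (hc m hdec)) hne

/-- Process a single unreliable step of a witness execution: if the step sends packets,
pump every sent message to abundance by degraded copies of the step first, then
replay the step itself with the accumulated extra packets. -/
lemma process_step (hP : IsProtocolStep Step) (hasync : FullyAsync Step)
    {C : Config Q M} {A : Set ℕ} {C1 : Config Q M}
    (hstep : UnrelStep Step C A C1)
    (G : GoodPrefix Step d C0) (c : M → ℕ)
    (ha : (G.E G.N).agentState = C.agentState)
    (hs : ∀ m, (G.E G.N).supply m = C.supply m + c m)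
    (hI3 : ∀ m, 0 < (G.E G.N).supply m → Expendable G.E d G.N m) :
    ∃ (G' : GoodPrefix Step d C0) (c' : M → ℕ), G.N ≤ G'.N ∧
      (∀ i ≤ G.N, G'.E i = G.E i) ∧
      (G'.E G'.N).agentState = C1.agentState ∧
      (∀ m, (G'.E G'.N).supply m = C1.supply m + c' m) ∧
      (∀ m, 0 < (G'.E G'.N).supply m → Expendable G'.E d G'.N m) := by
  obtain ⟨C', hstep0, hdom, hpkt, hper, hdisj⟩ := unrel_norm hstep
  have hs1 : ∀ m, C1.supply m = C'.supply m := fun m => supply_eq_of_packetMsg_eq hpkt m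
  obtain ⟨-, -, hcases, hagree⟩ := hasync C A C' hstep0
  rcases hcases with hsub | hsup
  · -- sending step
    have hmono : ∀ m, C.supply m ≤ C'.supply m := supply_mono_of_subset hsub hagree
    set T := Fbound (Fintype.card Q) (Fintype.card M) d 1 with hT
    set δ : M → ℕ := fun m => C'.supply m - C.supply m with hδ
    have hδ' : ∀ m, C'.supply m = C.supply m + δ m := by
      intro m; have := hmono m; simp only [hδ]; omega
    obtain ⟨Cd, hCd, haCd, hsCd⟩ : ∃ Cd, UnrelStep Step C A Cd ∧
        Cd.agentState = C.agentState ∧ ∀ m, Cd.supply m = C'.supply m :=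
      ⟨⟨C.agentState, C'.packetMsg, C.finAgents, C'.finPackets⟩,
        degraded hP hstep0, rfl, fun _ => rfl⟩
    have pump : ∀ j : ℕ, ∃ Gj : GoodPrefix Step d C0, G.N ≤ Gj.N ∧
        (∀ i ≤ G.N, Gj.E i = G.E i) ∧
        (Gj.E Gj.N).agentState = C.agentState ∧
        (∀ m, (Gj.E Gj.N).supply m = C.supply m + c m + j * δ m) := by
      intro j
      induction j with
      | zero => exact ⟨G, le_rfl, fun _ _ => rfl, ha, fun m => by rw [hs m]; ring⟩
      | succ j IHj =>
        obtain ⟨Gj, hNj, hagj, haj, hsj⟩ := IHj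
        obtain ⟨X'', hstepX, haX, hsX⟩ := replay hP hCd (Gj.E Gj.N)
          (fun m => c m + j * δ m) haj (fun m => by rw [hsj m]; ring)
        obtain ⟨Gj1, hN1, hag1, hend1⟩ := Gj.append hstepX
          (Or.inl (by rw [haX, haCd, haj]))
        refine ⟨Gj1, by omega,
          fun i hi => by rw [hag1 i (le_trans hi hNj), hagj i hi], ?_, ?_⟩
        · rw [hend1, haX, haCd]
        · intro m; rw [hend1, hsX m, hsCd m, hδ' m]; ring
    obtain ⟨GT, hNT, hagT, haT, hsT⟩ := pump T
    obtain ⟨X'', hstepX, haX, hsX⟩ := replay hP hstep (GT.E GT.N)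
      (fun m => c m + T * δ m) haT (fun m => by rw [hsT m]; ring)
    have hnodec : ∀ m, ¬ (X''.supply m < (GT.E GT.N).supply m) := by
      intro m
      rw [hsX m, hsT m, hs1 m, hδ' m]
      omega
    obtain ⟨G', hN', hag', hend'⟩ :=
      GT.append hstepX (Or.inr (fun m hm => absurd hm (hnodec m)))
    refine ⟨G', fun m => c m + T * δ m, by omega,
      fun i hi => by rw [hag' i (le_trans hi hNT), hagT i hi], ?_, ?_, ?_⟩
    · rw [hend', haX]
    · intro m; rw [hend', hsX m]
    · intro m hpos
      by_cases hδm : δ m = 0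
      · have heq : (G'.E G'.N).supply m = (G.E G.N).supply m := by
          rw [hend', hsX m, hs1 m, hδ' m, hδm, hs m]; ring
        rw [heq] at hpos
        exact expendable_mono
          (fun i hi => by rw [hag' i (le_trans hi hNT), hagT i hi])
          (by omega) (hI3 m hpos)
      · have habT : Abundant (GT.E GT.N) d m := by
          refine ⟨{m}, ?_, Finset.mem_singleton_self m⟩
          intro m' hm'
          rw [Finset.mem_singleton] at hm'
          subst hm'
          rw [Finset.card_singleton, hsT m']
          have h1 : T ≤ T * δ m' := Nat.le_mul_of_pos_right T (by omega)
          omega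
        exact ⟨GT.N, by omega, by rw [hag' GT.N le_rfl]; exact habT⟩
  · -- consuming step
    have hmono : ∀ m, C'.supply m ≤ C.supply m :=
      supply_mono_of_subset hsup (fun p h1 h2 => (hagree p h2 h1).symm)
    obtain ⟨X'', hstepX, haX, hsX⟩ := replay hP hstep (G.E G.N) c ha hs
    obtain ⟨G', hN', hag', hend'⟩ := G.append hstepX
      (Or.inr (fun m hm => hI3 m (by omega)))
    refine ⟨G', c, by omega, hag', by rw [hend', haX],
      fun m => by rw [hend', hsX m], ?_⟩
    intro m hpos
    have hle : (G'.E G'.N).supply m ≤ (G.E G.N).supply m := by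
      rw [hend', hsX m, hs1 m, hs m]
      have := hmono m
      omega
    exact expendable_mono hag' (by omega) (hI3 m (by omega))

/-- Carefully replay a whole reachability witness with extra packets. -/
lemma ext_reaches (hP : IsProtocolStep Step) (hasync : FullyAsync Step)
    {C D : Config Q M} (hr : Reaches (UnrelStep Step) C D) :
    ∀ (G : GoodPrefix Step d C0) (c : M → ℕ),
      (G.E G.N).agentState = C.agentState →
      (∀ m, (G.E G.N).supply m = C.supply m + c m) →
      (∀ m, 0 < (G.E G.N).supply m → Expendable G.E d G.N m) →
      ∃ (G' : GoodPrefix Step d C0) (c' : M → ℕ), G.N ≤ G'.N ∧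
        (∀ i ≤ G.N, G'.E i = G.E i) ∧
        (G'.E G'.N).agentState = D.agentState ∧
        (∀ m, (G'.E G'.N).supply m = D.supply m + c' m) ∧
        (∀ m, 0 < (G'.E G'.N).supply m → Expendable G'.E d G'.N m) := by
  induction hr using Relation.ReflTransGen.head_induction_on with
  | refl => exact fun G c ha hs h3 => ⟨G, c, le_rfl, fun _ _ => rfl, ha, hs, h3⟩
  | head hstep htail IH =>
    intro G c ha hs h3
    obtain ⟨A, hA⟩ := hstep
    obtain ⟨G1, c1, hN1, hag1, ha1, hx1, h31⟩ := process_step hP hasync hA G c ha hs h3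
    obtain ⟨G2, c2, hN2, hag2, ha2, hx2, h32⟩ := IH G1 c1 ha1 hx1 h31
    exact ⟨G2, c2, le_trans hN1 hN2,
      fun i hi => by rw [hag2 i (le_trans hi hN1), hag1 i hi], ha2, hx2, h32⟩

/-- Iterate: extend the prefix until every message that can ever get positive supply
from its end configuration is expendable. -/
lemma rounds (hP : IsProtocolStep Step) (hasync : FullyAsync Step) :
    ∀ (k : ℕ) (G : GoodPrefix Step d C0),
      (∀ m, 0 < (G.E G.N).supply m → Expendable G.E d G.N m) →
      {m : M | ¬ Expendable G.E d G.N m}.ncard ≤ k →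
      ∃ G' : GoodPrefix Step d C0,
        ∀ m, (∃ D, Reaches (UnrelStep Step) (G'.E G'.N) D ∧ 0 < D.supply m) →
          Expendable G'.E d G'.N m := by
  intro k
  induction k with
  | zero =>
    intro G _ hcard
    refine ⟨G, fun m _ => ?_⟩
    by_contra hne
    have hmem : m ∈ {m : M | ¬ Expendable G.E d G.N m} := hne
    have hemp : {m : M | ¬ Expendable G.E d G.N m} = ∅ :=
      (Set.ncard_eq_zero (Set.toFinite _)).mp (le_antisymm hcard (Nat.zero_le _))
    rw [hemp] at hmem
    exact hmem
  | succ k IH =>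
    intro G h3 hcard
    by_cases hall : ∀ m, (∃ D, Reaches (UnrelStep Step) (G.E G.N) D ∧ 0 < D.supply m) →
        Expendable G.E d G.N m
    · exact ⟨G, hall⟩
    · push_neg at hall
      obtain ⟨m0, ⟨D, hrD, hposD⟩, hne0⟩ := hall
      obtain ⟨G1, c1, hN1, hag1, ha1, hx1, h31⟩ := ext_reaches hP hasync hrD G
        (fun _ => 0) rfl (fun m => rfl) h3
      have hexp0 : Expendable G1.E d G1.N m0 := h31 m0 (by rw [hx1 m0]; omega)
      have hsubset : {m : M | ¬ Expendable G1.E d G1.N m}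
          ⊂ {m : M | ¬ Expendable G.E d G.N m} := by
        constructor
        · intro m hm
          exact fun h => hm (expendable_mono hag1 hN1 h)
        · intro hsub
          exact (hsub hne0) hexp0
      have hlt := Set.ncard_lt_ncard hsubset (Set.toFinite _)
      exact IH G1 h31 (by omega)

omit [Fintype Q] [Fintype M] in
lemma reaches_of_exec {Step : StepRel Q M} {E : ℕ → Config Q M}
    (h : IsExecution Step E) {i j : ℕ} (hij : i ≤ j) : Reaches Step (E i) (E j) := by
  induction j, hij using Nat.le_induction with
  | base => exact Relation.ReflTransGen.refl
  | succ n hn IHn =>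
    rcases h n with heq | hst
    · rw [heq]; exact IHn
    · exact IHn.tail hst

end Aux3

/-- Every well-specified unreliable fully asynchronous protocol with a single-letter
input alphabet has a careful fair execution starting from the input configuration with
a single agent in the only input state. -/
theorem careful_fair_execution_exists {Q M : Type} [Fintype Q] [Nonempty Q] [Fintype M]
    (P : Protocol Q M Unit) (hP : IsProtocolStep P.Step) (hasync : FullyAsync P.Step)
    (hEv : Eventual (UnrelStep P.Step) P.fair)
    (hAct : EnsuresActivity (UnrelStep P.Step) P.fair)
    (d : ℕ) (hd : IsInDegree (UnrelStep P.Step) d)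
    (hws : ∃ φ : (Unit → ℕ) → Bool, Implements (Unreliable P) φ)
    (C0 : Config Q M) (hC0 : IsInputConfig P.Iin (fun _ => 1) C0) :
    ∃ E : ℕ → Config Q M, IsExecution (UnrelStep P.Step) E ∧ E 0 = C0 ∧
      P.fair E ∧ Careful E d := by
  classical
  have hsupply0 : ∀ m, C0.supply m = 0 := by
    intro m
    have hemp : {p | C0.packetMsg p = some m} = ∅ := by
      ext p; simp [hC0.1 p]
    rw [Config.supply, hemp, Set.ncard_empty]
  set G0 : GoodPrefix P.Step d C0 :=
    ⟨0, fun _ => C0, rfl, fun i hi => absurd hi (Nat.not_lt_zero i),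
      fun n hn => absurd hn (Nat.not_lt_zero n)⟩ with hG0
  have h30 : ∀ m, 0 < (G0.E G0.N).supply m → Expendable G0.E d G0.N m := by
    intro m hm
    exact absurd hm (by simp [hG0, hsupply0 m])
  have hcard : {m : M | ¬ Expendable G0.E d G0.N m}.ncard ≤ Fintype.card M := by
    refine le_trans (Set.ncard_le_ncard (Set.subset_univ _) (Set.toFinite _)) ?_
    rw [Set.ncard_univ, Nat.card_eq_fintype_card]
  obtain ⟨G', hG'⟩ := rounds hP hasync (Fintype.card M) G0 h30 hcard
  obtain ⟨E', hag, hexecE, hfair⟩ := hEv G'.N G'.E G'.hexec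
  refine ⟨E', hexecE, ?_, hfair, ?_⟩
  · rw [hag 0 (Nat.zero_le _), G'.h0]
  · intro n m hne hdec a
    rcases Nat.lt_or_ge n G'.N with h | h
    · have e1 : E' n = G'.E n := hag n (by omega)
      have e2 : E' (n + 1) = G'.E (n + 1) := hag (n + 1) (by omega)
      rw [e1, e2] at hdec ⊢
      refine G'.hcare n h m ?_ hdec a
      intro hex
      exact hne ((expendable_congr (fun i hi => hag i (by omega)) m).mpr hex)
    · exfalso
      have hreach : Reaches (UnrelStep P.Step) (E' G'.N) (E' n) :=
        reaches_of_exec hexecE h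
      rw [hag G'.N le_rfl] at hreach
      have hpos : 0 < (E' n).supply m := by omega
      have hex : Expendable G'.E d G'.N m := hG' m ⟨E' n, hreach, hpos⟩
      exact hne (expendable_mono (fun i hi => hag i (by omega)) h hex)
end

section
/- Let k ≥ 1, let φ : ℕ^k → {true, false}, and let N ∈ ℕ be such that for every x ∈ ℕ^k and every coordinate i, if x_i > N then φ(x + e_i) = φ(x), where e_i is the i-th unit vector. Then the set {x ∈ ℕ^k | φ(x) = true} is a counting set; moreover, it is a finite union of cubes all of whose finite bounds are at most N + 1. -/
open scoped Classical

lemma trunc_eq_aux (k N : ℕ) (φ : (Fin k → ℕ) → Bool)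
    (h : ∀ (x : Fin k → ℕ) (i : Fin k), N < x i →
      φ (Function.update x i (x i + 1)) = φ x) :
    ∀ x : Fin k → ℕ, φ x = φ (fun i => min (x i) (N + 1)) := by
  suffices H : ∀ n (x : Fin k → ℕ), ∑ i, x i = n →
      φ x = φ (fun i => min (x i) (N + 1)) from fun x => H _ x rfl
  intro n
  induction n using Nat.strong_induction_on with
  | _ n ih =>
    intro x hx
    by_cases hall : ∀ i, x i ≤ N + 1
    · have hxe : (fun i => min (x i) (N + 1)) = x := funext fun i => min_eq_left (hall i)
      rw [hxe]
    · push_neg at hall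
      obtain ⟨i, hi⟩ := hall
      set y := Function.update x i (x i - 1) with hy
      have hyi : y i = x i - 1 := Function.update_self i _ x
      have hup : Function.update y i (y i + 1) = x := by
        funext j
        rcases eq_or_ne j i with rfl | hj
        · simp [hyi, Nat.sub_add_cancel (by omega : 1 ≤ x j)]
        · simp [hy, Function.update_of_ne hj]
      have hφ : φ x = φ y := by
        have := h y i (by rw [hyi]; omega)
        rwa [hup] at this
      have hsum : ∑ j, y j < n := by
        rw [← hx]
        have h1 : ∑ j, y j = (x i - 1) + ∑ j ∈ Finset.univ \ {i}, x j :=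
          Finset.sum_update_of_mem (Finset.mem_univ i) x (x i - 1)
        have h2 : ∑ j, x j = x i + ∑ j ∈ Finset.univ \ {i}, x j := by
          rw [Finset.sdiff_singleton_eq_erase]
          exact (Finset.add_sum_erase _ _ (Finset.mem_univ i)).symm
        omega
      have hmin : (fun j => min (y j) (N + 1)) = fun j => min (x j) (N + 1) := by
        funext j
        rcases eq_or_ne j i with rfl | hj
        · rw [hyi]; omega
        · simp [hy, Function.update_of_ne hj]
      rw [hφ, ih _ hsum y rfl, hmin]

/-- If incrementing any coordinate of `x` that is larger than `N` never changes `φ x`,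
then the set of inputs accepted by `φ` is a counting set, namely a finite union of
cubes all of whose finite bounds are at most `N + 1`. -/
theorem threshold_invariance_gives_counting_set (k : ℕ) (hk : 1 ≤ k)
    (φ : (Fin k → ℕ) → Bool) (N : ℕ)
    (h : ∀ (x : Fin k → ℕ) (i : Fin k), N < x i →
      φ (Function.update x i (x i + 1)) = φ x) :
    ∃ (n : ℕ) (l : Fin n → Fin k → ℕ) (u : Fin n → Fin k → ℕ∞),
      (∀ j i, l j i ≤ N + 1) ∧
      (∀ j i, u j i ≠ ⊤ → u j i ≤ (N + 1 : ℕ)) ∧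
      {x | φ x = true} = ⋃ j, cube (l j) (u j) := by
  classical
  set n := Fintype.card (Fin k → Fin (N + 2)) with hn
  let e : Fin n ≃ (Fin k → Fin (N + 2)) := (Fintype.equivFin _).symm
  let cv : Fin n → Fin k → ℕ := fun j i => (e j i : ℕ)
  refine ⟨n,
    fun j => if φ (cv j) = true then cv j else fun _ => 1,
    fun j => if φ (cv j) = true then
      (fun i => if cv j i = N + 1 then ⊤ else (cv j i : ℕ∞)) else fun _ => 0,
    ?_, ?_, ?_⟩
  · intro j i
    dsimp only
    split
    · exact Nat.lt_succ_iff.mp (e j i).2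
    · simp
  · intro j i
    dsimp only
    split
    · dsimp only
      split
      · simp
      · intro _
        exact_mod_cast Nat.cast_le.mpr (Nat.lt_succ_iff.mp (e j i).2)
    · intro _
      exact_mod_cast Nat.cast_le.mpr (by omega : (0:ℕ) ≤ N + 1)
  · ext x
    simp only [Set.mem_setOf_eq, Set.mem_iUnion]
    constructor
    · intro hx
      -- truncation of x
      have htr := trunc_eq_aux k N φ h x
      set c : Fin k → Fin (N + 2) := fun i => ⟨min (x i) (N + 1), by omega⟩ with hc
      refine ⟨e.symm c, ?_⟩
      have hcv : cv (e.symm c) = fun i => min (x i) (N + 1) := by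
        funext i
        simp [cv, hc]
      have hφc : φ (cv (e.symm c)) = true := by rw [hcv, ← htr]; exact hx
      simp only [hφc, if_pos]
      intro i
      rw [hcv]
      constructor
      · exact min_le_left _ _
      · dsimp only
        split
        · exact le_top
        · rename_i hne
          have hm : min (x i) (N + 1) = x i := by omega
          rw [hm]
    · rintro ⟨j, hj⟩
      by_cases hφj : φ (cv j) = true
      · simp only [hφj, if_pos] at hj
        -- show min (x i) (N+1) = cv j i
        have htr := trunc_eq_aux k N φ h x
        have hx : (fun i => min (x i) (N + 1)) = cv j := by
          funext i
          obtain ⟨h1, h2⟩ := hj i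
          rcases eq_or_ne (cv j i) (N + 1) with hN | hN
          · rw [hN]
            simp [hN] at h1
            omega
          · dsimp only at h2
            rw [if_neg hN] at h2
            have hle : x i ≤ cv j i := by exact_mod_cast h2
            have : cv j i ≤ N + 1 := Nat.lt_succ_iff.mp (e j i).2
            omega
        rw [htr, hx]
        exact hφj
      · simp only [hφj, if_neg] at hj
        obtain ⟨i⟩ := Fin.pos_iff_nonempty.mp hk
        obtain ⟨h1, h2⟩ := hj i
        simp at h1 h2
        omega
end

section
/- The population protocol with states Q = {q0, q+, q−}, no messages, input alphabet Σ = {σ} with input mapping I(σ) = q0, an arbitrary output function o, the interaction relation δ = {((q0,q0),(q+,q−))} (its only interaction takes two agents in state q0 to states q+ and q−), and the default fairness condition, is not shadow-permitting. In particular, for the configuration C consisting of two agents in state q0, no fair execution starting from C has a shadow extension around each of its agents. -/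
open scoped Classical

/-- The step relation of the population protocol with interaction relation `δ` :
two distinct agents `a1, a2` in states `q1, q2` with `((q1,q2),(q3,q4)) ∈ δ`
switch to states `q3, q4`; both are active. -/
def popStep {Q : Type} (δ : Q × Q → Q × Q → Prop) : StepRel Q Empty := fun C A C' =>
  ∃ a1 a2 q1 q2 q3 q4, a1 ≠ a2 ∧ C.agentState a1 = some q1 ∧ C.agentState a2 = some q2 ∧
    δ (q1, q2) (q3, q4) ∧ A = {a1, a2} ∧
    C' = (C.setAgent a1 (some q3)).setAgent a2 (some q4)

/-- The states `q0`, `q+`, `q-`. -/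
inductive St : Type
  | q0 | qp | qm

/-- The single interaction `(q0, q0) → (q+, q-)`. -/
def delta15 : St × St → St × St → Prop := fun pq rs =>
  pq = (St.q0, St.q0) ∧ rs = (St.qp, St.qm)

/-- The population protocol with states `{q0, q+, q-}`, no messages, a single input
letter mapped to `q0`, output function `o`, the single interaction
`(q0,q0) → (q+,q-)`, and the default fairness condition. -/
def P15 (o : St → Bool) : Protocol St Empty Unit :=
  ⟨fun _ => St.q0, o, popStep delta15, DefaultFair (popStep delta15)⟩


/-- Structure of a single step of the protocol `P15`. -/
theorem step_spec15 {C : Config St Empty} {A : Set ℕ} {C' : Config St Empty}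
    (h : popStep delta15 C A C') :
    ∃ a1 a2, a1 ≠ a2 ∧ C.agentState a1 = some St.q0 ∧ C.agentState a2 = some St.q0 ∧
      C'.agentState a1 = some St.qp ∧ C'.agentState a2 = some St.qm ∧
      ∀ x, x ≠ a1 → x ≠ a2 → C'.agentState x = C.agentState x := by
  obtain ⟨a1, a2, q1, q2, q3, q4, hne, h1, h2, hδ, hA, hC'⟩ := h
  simp only [delta15, Prod.mk.injEq] at hδ
  obtain ⟨⟨rfl, rfl⟩, rfl, rfl⟩ := hδ
  subst hC'
  refine ⟨a1, a2, hne, h1, h2, ?_, ?_, ?_⟩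
  · simp [Config.setAgent, Function.update_apply, hne]
  · simp [Config.setAgent, Function.update_apply]
  · intro x hx1 hx2
    simp [Config.setAgent, Function.update_apply, hx1, hx2]

/-- In any execution that projects (by removing the fresh agent `a'`) onto an
execution `E` of `P15`, the fresh agent stays in state `q0` forever. -/
theorem shadow_q0 {E E' : ℕ → Config St Empty} {a' : ℕ}
    (hexec : IsExecution (popStep delta15) E)
    (hexec' : IsExecution (popStep delta15) E')
    (hinit : (E' 0).agentState a' = some St.q0)
    (hproj : ∀ k, (E' k).setAgent a' none = E k) :
    ∀ k, (E' k).agentState a' = some St.q0 := by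
  have hEa' : ∀ k, (E k).agentState a' = none := by
    intro k; rw [← hproj k]; simp [Config.setAgent]
  have hprojx : ∀ k (x : ℕ), x ≠ a' → (E k).agentState x = (E' k).agentState x := by
    intro k x hx; rw [← hproj k]; simp [Config.setAgent, Function.update_apply, hx]
  intro k
  induction k with
  | zero => exact hinit
  | succ k ih =>
    have key : ∀ d : ℕ, d ≠ a' → (E' k).agentState d = some St.q0 →
        (E' (k+1)).agentState d ≠ some St.q0 →
        (∀ x : ℕ, x ≠ a' → x ≠ d → (E' (k+1)).agentState x = (E' k).agentState x) →
        False := by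
      intro d hd hdq hdq' hunch
      have hEkd : (E k).agentState d = some St.q0 := by rw [hprojx k d hd]; exact hdq
      have hEk1d : (E (k+1)).agentState d ≠ some St.q0 := by
        rw [hprojx (k+1) d hd]; exact hdq'
      rcases hexec k with heq | ⟨A, hstep⟩
      · rw [heq] at hEk1d; exact hEk1d hEkd
      obtain ⟨b1, b2, hbne, hb1, hb2, hb1', hb2', hothE⟩ := step_spec15 hstep
      have hb1a' : b1 ≠ a' := fun h => by rw [h, hEa' k] at hb1; cases hb1
      have hb2a' : b2 ≠ a' := fun h => by rw [h, hEa' k] at hb2; cases hb2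
      have hb1d : b1 = d := by
        by_contra h
        have := hunch b1 hb1a' h
        rw [← hprojx (k+1) b1 hb1a', ← hprojx k b1 hb1a'] at this
        rw [hb1', hb1] at this
        simp at this
      have hb2d : b2 = d := by
        by_contra h
        have := hunch b2 hb2a' h
        rw [← hprojx (k+1) b2 hb2a', ← hprojx k b2 hb2a'] at this
        rw [hb2', hb2] at this
        simp at this
      exact hbne (hb1d.trans hb2d.symm)
    rcases hexec' k with heq | ⟨A, hstep⟩
    · rw [heq]; exact ih
    obtain ⟨a1, a2, hne12, h1, h2, h1', h2', hoth⟩ := step_spec15 hstep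
    by_cases hx1 : a' = a1
    · exfalso
      subst hx1
      refine key a2 (fun h => hne12 (h.symm)) h2 ?_ ?_
      · rw [h2']; simp
      · intro x hxa' hxa2; exact hoth x hxa' hxa2
    by_cases hx2 : a' = a2
    · exfalso
      subst hx2
      refine key a1 (fun h => hne12 h) h1 ?_ ?_
      · rw [h1']; simp
      · intro x hxa' hxa1; exact hoth x hxa1 hxa'
    · rw [hoth a' hx1 hx2]; exact ih

/-- The core impossibility: no fair execution from two `q0` agents has shadow
extensions around all agents. -/
theorem aux15 (C : Config St Empty) (h2 : C.agentsDom.ncard = 2)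
    (hq0 : ∀ a ∈ C.agentsDom, C.agentState a = some St.q0) :
    ¬ ∃ E : ℕ → Config St Empty, IsExecution (popStep delta15) E ∧ E 0 = C ∧
        DefaultFair (popStep delta15) E ∧
        ∀ a ∈ C.agentsDom, ∃ a' ∉ C.agentsDom,
          ∃ Ext, IsShadowExtension (popStep delta15) E a a' Ext := by
  rintro ⟨E, hE, hE0, hfair, hsh⟩
  obtain ⟨a, b, hab, hCab⟩ := Set.ncard_eq_two.mp h2
  have ha : a ∈ C.agentsDom := by rw [hCab]; simp
  have hb : b ∈ C.agentsDom := by rw [hCab]; simp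
  have haq : C.agentState a = some St.q0 := hq0 a ha
  have hbq : C.agentState b = some St.q0 := hq0 b hb
  -- Step A: the execution cannot stay at `C` forever.
  have hnotconst : ¬ ∀ m, E m = C := by
    intro hall
    have hstep : stepTo (popStep delta15) C
        ((C.setAgent a (some St.qp)).setAgent b (some St.qm)) :=
      ⟨{a, b}, a, b, St.q0, St.q0, St.qp, St.qm, hab, haq, hbq, ⟨rfl, rfl⟩, rfl, rfl⟩
    have hCne : C ≠ (C.setAgent a (some St.qp)).setAgent b (some St.qm) := by
      intro h
      have := congrArg (fun D => D.agentState a) h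
      simp only [Config.setAgent, Function.update_apply] at this
      rw [haq] at this
      simp [hab] at this
    rcases hfair ((C.setAgent a (some St.qp)).setAgent b (some St.qm)) with ⟨n, hn⟩ | hinf
    · refine hn n le_rfl ?_
      rw [hall n]
      exact Relation.ReflTransGen.single hstep
    · obtain ⟨m, _, hm⟩ := hinf 0
      exact hCne ((hall m).symm.trans hm)
  -- find the first step
  have hPex : ∃ n, E n ≠ C := by
    by_contra h
    push_neg at h
    exact hnotconst h
  have hfind0 : Nat.find hPex ≠ 0 := fun h => Nat.find_spec hPex (by rw [h]; exact hE0)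
  obtain ⟨k, hk⟩ := Nat.exists_eq_succ_of_ne_zero hfind0
  have hEk : E k = C := by
    by_contra h
    exact Nat.find_min hPex (by rw [hk]; exact Nat.lt_succ_self k) h
  have hEk1 : E (k + 1) ≠ E k := by
    rw [hEk]
    have := Nat.find_spec hPex
    rw [hk] at this
    exact this
  rcases hE k with heq | ⟨A, hstep⟩
  · exact hEk1 heq
  obtain ⟨a1, a2, hne12, h1, h2, h1', h2', _⟩ := step_spec15 hstep
  have hc : a1 ∈ C.agentsDom := by
    rw [hEk] at h1
    simp [Config.agentsDom, h1]
  obtain ⟨a', ha', Ext, hcdom, ha'dom, hall, hsame⟩ := hsh a1 hc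
  have ha'none : (E 0).agentState a' = none := by
    rw [hE0]
    by_contra h
    exact ha'dom (by rw [hE0]; exact h)
  obtain ⟨E', hE'mem, hsameT⟩ := hsame (k + 1)
  obtain ⟨hexec', hinit', hproj'⟩ := hall E' hE'mem
  have hinit'' : (E' 0).agentState a' = some St.q0 := by
    rw [hinit', hE0]; exact hq0 a1 hc
  have hq0all := shadow_q0 hE hexec' hinit'' hproj'
  have ha1a' : a1 ≠ a' := by
    intro h
    rw [hEk, h] at h1
    rw [hE0, h1] at ha'none
    cases ha'none
  have ha1state : (E' (k + 1)).agentState a1 = some St.qp := by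
    rw [← hproj' (k + 1)] at h1'
    simpa [Config.setAgent, Function.update_apply, ha1a'] using h1'
  rw [hq0all (k + 1), ha1state] at hsameT
  simp at hsameT

/-- A configuration with exactly two agents, both in state `q0`. -/
noncomputable def C0q : Config St Empty where
  agentState := fun n => if n = 0 ∨ n = 1 then some St.q0 else none
  packetMsg := fun _ => none
  finAgents := by
    apply Set.Finite.subset ((Set.finite_singleton 1).insert 0)
    intro x hx
    simp only [Set.mem_setOf_eq] at hx
    by_contra h
    simp only [Set.mem_insert_iff, Set.mem_singleton_iff] at h
    push_neg at h
    simp [h.1, h.2] at hx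
  finPackets := Set.finite_empty.subset (by simp)

theorem C0q_dom : C0q.agentsDom = {0, 1} := by
  ext x
  simp only [Config.agentsDom, C0q, Set.mem_setOf_eq, Set.mem_insert_iff,
    Set.mem_singleton_iff]
  by_cases h : x = 0 ∨ x = 1 <;> simp [h]

/-- The protocol `P15` is not shadow-permitting; in particular, for any configuration
consisting of two agents in state `q0`, no fair execution starting from it has a shadow
extension around each of its agents. -/
theorem not_shadow_permitting (o : St → Bool) :
    ¬ ShadowPermitting (P15 o) ∧
    ∀ C : Config St Empty, C.agentsDom.ncard = 2 →
      (∀ a ∈ C.agentsDom, C.agentState a = some St.q0) →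
      ¬ ∃ E : ℕ → Config St Empty, IsExecution (popStep delta15) E ∧ E 0 = C ∧
          DefaultFair (popStep delta15) E ∧
          ∀ a ∈ C.agentsDom, ∃ a' ∉ C.agentsDom,
            ∃ Ext, IsShadowExtension (popStep delta15) E a a' Ext := by
  have main := aux15
  constructor
  · intro h
    obtain ⟨E, hE1, hE2, hE3, hE4⟩ := h C0q
    refine aux15 C0q ?_ ?_ ⟨E, hE1, hE2, hE3, hE4⟩
    · rw [C0q_dom]
      exact Set.ncard_pair (by norm_num)
    · intro a haDom
      rw [C0q_dom] at haDom
      simp only [Set.mem_insert_iff, Set.mem_singleton_iff] at haDom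
      simp [C0q, haDom]
  · exact fun C h2 hq0 => aux15 C h2 hq0
end
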